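/- Every blockwise decomposable relation R is balanced: for every pair of distinct variables x,y in the scope of R, the |D|×|D| integer matrix whose (a,b) entry is the number of solutions of R with x=a and y=b is a proper block matrix in which every block, viewed as a real matrix, has rank at most 1. -/

import Mathlib

/-- Projection of a constraint (a set of assignments `V → D`) onto a set `Y` of
variables: the set of restrictions of solutions to `Y`. -/
def proj {V D : Type*} (Y : Set V) (R : Set (V → D)) : Set (Y → D) :=
  {g | ∃ f ∈ R, ∀ y : Y, f y = g y}

/-- A constraint is decomposable with respect to the partition `(P, Pᶜ)` of its scope
if it is the product of its projections onto `P` and `Pᶜ`. -/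
def Decomp {V D : Type*} (R : Set (V → D)) (P : Set V) : Prop :=
  ∀ f : V → D,
    f ∈ R ↔ ((fun v : P => f v) ∈ proj P R ∧ (fun v : ↥(Pᶜ) => f v) ∈ proj Pᶜ R)

/-- `R` is blockwise decomposable in the pair of variables `x, y`: the selection
matrix `M^R_{x,y}` is a proper block matrix (blocks `(A ℓ, B ℓ)`), and each block
restriction of `R` decomposes as a product over a partition separating `x` from `y`. -/
def BlockwiseIn {V D : Type*} (R : Set (V → D)) (x y : V) : Prop :=
  ∃ (k : ℕ) (A B : Fin k → Set D),
    (∀ i j, i ≠ j → Disjoint (A i) (A j)) ∧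
    (∀ i j, i ≠ j → Disjoint (B i) (B j)) ∧
    (∀ a b : D, (∃ f ∈ R, f x = a ∧ f y = b) ↔ ∃ ℓ, a ∈ A ℓ ∧ b ∈ B ℓ) ∧
    (∀ ℓ, ∃ P : Set V, x ∈ P ∧ y ∉ P ∧ Decomp {f ∈ R | f x ∈ A ℓ ∧ f y ∈ B ℓ} P)

/-- `R` is blockwise decomposable: blockwise decomposable in every pair of
distinct scope variables. -/
def Blockwise {V D : Type*} (R : Set (V → D)) : Prop :=
  ∀ x y : V, x ≠ y → BlockwiseIn R x y

/-- The counting matrix: number of solutions of `R` with `x = a` and `y = b`. -/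
noncomputable def countMatrix {V D : Type*} (R : Set (V → D)) (x y : V) (a b : D) : ℕ :=
  Nat.card {f : V → D // f ∈ R ∧ f x = a ∧ f y = b}

/-!
A solution of a block restriction of `R` decomposing along `(P, Pᶜ)` with `x ∈ P`, `y ∉ P`
is a free pair of a `P`-part and a `Pᶜ`-part; the value at `x` only depends on the first
and the value at `y` only on the second. Counting fibres, the block of the counting matrix
is the outer product of the fibre counts of the two projections, hence has rank at most 1.
On a finite domain the nonzero pattern of the counting matrix is that of the selection
matrix, so the blocks are the same.
-/

section

variable {V D : Type*}

theorem countMatrix_ne_zero_iff [Finite V] [Finite D] (R : Set (V → D)) (x y : V) (a b : D) :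
    countMatrix R x y a b ≠ 0 ↔ ∃ f ∈ R, f x = a ∧ f y = b := by
  rw [countMatrix, Nat.card_ne_zero, and_iff_left Subtype.finite, nonempty_subtype]

theorem countMatrix_sep_eq (R : Set (V → D)) (x y : V) {A B : Set D} {a b : D}
    (ha : a ∈ A) (hb : b ∈ B) :
    countMatrix {f ∈ R | f x ∈ A ∧ f y ∈ B} x y a b = countMatrix R x y a b :=
  Nat.card_congr <| Equiv.subtypeEquivRight fun f => by
    constructor
    · rintro ⟨⟨hf, -⟩, hfx, hfy⟩
      exact ⟨hf, hfx, hfy⟩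
    · rintro ⟨hf, rfl, rfl⟩
      exact ⟨⟨hf, ha, hb⟩, rfl, rfl⟩

open Classical in
noncomputable def Decomp.fiberEquiv {S : Set (V → D)} {P : Set V} (hS : Decomp S P) {x y : V}
    (hx : x ∈ P) (hy : y ∉ P) (a b : D) :
    {f : V → D // f ∈ S ∧ f x = a ∧ f y = b} ≃
      {g : P → D // g ∈ proj P S ∧ g ⟨x, hx⟩ = a} ×
        {g : ↥Pᶜ → D // g ∈ proj Pᶜ S ∧ g ⟨y, hy⟩ = b} :=
  ((Equiv.piEquivPiSubtypeProd (· ∈ P) fun _ => D).subtypeEquiv fun f => by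
      rw [hS f]
      exact and_and_and_comm).trans Equiv.subtypeProdEquivProd

theorem Decomp.exists_countMatrix_eq_mul {S : Set (V → D)} {P : Set V} (hS : Decomp S P)
    {x y : V} (hx : x ∈ P) (hy : y ∉ P) :
    ∃ r c : D → ℕ, ∀ a b, countMatrix S x y a b = r a * c b :=
  ⟨fun a => Nat.card {g : P → D // g ∈ proj P S ∧ g ⟨x, hx⟩ = a},
    fun b => Nat.card {g : ↥Pᶜ → D // g ∈ proj Pᶜ S ∧ g ⟨y, hy⟩ = b},
    fun a b => (Nat.card_congr (hS.fiberEquiv hx hy a b)).trans (Nat.card_prod _ _)⟩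

end

theorem stmt_3_general {V D : Type*} [Fintype V] [Fintype D]
    (R : Set (V → D)) (h : Blockwise R) :
    ∀ x y : V, x ≠ y →
      ∃ (k : ℕ) (A B : Fin k → Set D),
        (∀ i j, i ≠ j → Disjoint (A i) (A j)) ∧
        (∀ i j, i ≠ j → Disjoint (B i) (B j)) ∧
        (∀ a b : D, countMatrix R x y a b ≠ 0 ↔ ∃ ℓ, a ∈ A ℓ ∧ b ∈ B ℓ) ∧
        (∀ ℓ, ∃ r c : D → ℝ, ∀ a ∈ A ℓ, ∀ b ∈ B ℓ,
          (countMatrix R x y a b : ℝ) = r a * c b) := by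
  intro x y hxy
  obtain ⟨k, A, B, hA, hB, hpattern, hdecomp⟩ := h x y hxy
  refine ⟨k, A, B, hA, hB, fun a b => (countMatrix_ne_zero_iff R x y a b).trans
    (hpattern a b), fun ℓ => ?_⟩
  obtain ⟨P, hxP, hyP, hP⟩ := hdecomp ℓ
  obtain ⟨r, c, hrc⟩ := hP.exists_countMatrix_eq_mul hxP hyP
  refine ⟨fun a => r a, fun b => c b, fun a ha b hb => ?_⟩
  dsimp only
  exact_mod_cast (countMatrix_sep_eq R x y ha hb).symm.trans (hrc a b)

theorem stmt_3 {V D : Type*} [Fintype V] [Fintype D] (hV : 3 ≤ Fintype.card V)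
    (R : Set (V → D)) (h : Blockwise R) :
    ∀ x y : V, x ≠ y →
      ∃ (k : ℕ) (A B : Fin k → Set D),
        (∀ i j, i ≠ j → Disjoint (A i) (A j)) ∧
        (∀ i j, i ≠ j → Disjoint (B i) (B j)) ∧
        (∀ a b : D, countMatrix R x y a b ≠ 0 ↔ ∃ ℓ, a ∈ A ℓ ∧ b ∈ B ℓ) ∧
        (∀ ℓ, ∃ r c : D → ℝ, ∀ a ∈ A ℓ, ∀ b ∈ B ℓ,
          (countMatrix R x y a b : ℝ) = r a * c b) :=
  stmt_3_general R h
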